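/- arXiv:2604.01827 — 3 statements merged into one kernel-verified Lean document; each statement's English description precedes it below -/
import Mathlib

section
/- Let n ≥ 1 and let D = {u ∈ ℝ^n : 0 < u_i for all i and ∑_{i=1}^n u_i < 1}, with u_0 := 1 - ∑_{i=1}^n u_i. Let (q_{ij})_{i,j=1}^n and (r_{ij})_{i,j=1}^n be real matrices with q_{ij} ≥ r_{ij} ≥ 0 for all i,j, and suppose the symmetric part of (q_{ij}+r_{ij}) is positive definite with smallest eigenvalue α > 0. Define q_i(u) = ∑_{j=1}^n q_{ij} u_j, r_i(u) = ∑_{j=1}^n r_{ij} u_j, the Hessian H(u)_{ij} = δ_{ij}/u_i + 1/u_0, and A(u)_{ij} = (q_i(u) - r_i(u)) δ_{ij} + u_i ( q_{ij} - q_j(u) + r_{ij} + r_j(u) - ∑_{ℓ=1}^n u_ℓ (q_{ℓj} + r_{ℓj}) ). Then for all u ∈ D and all z ∈ ℝ^n, zᵀ H(u) A(u) z ≥ α |z|². -/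
/-!
Every column of `A(u)` sums to `u₀ (q_j - r_j + ∑ₗ uₗ (q_{ℓj} + r_{ℓj}))`, so the rank-one part
`1/u₀` of `H(u)` cancels the non-symmetric terms of `A(u)` and
`(H(u) A(u))_{ij} = δ_{ij} (qᵢ(u) - rᵢ(u)) / uᵢ + q_{ij} + r_{ij}`.
The diagonal part is nonnegative because `q ≥ r` and `u > 0`, and the rest is the quadratic form
of `q + r`, which is bounded below by `α |z|²`.
-/

open Finset

/-- Solvent volume fraction `u₀ = 1 - ∑ uᵢ`. -/
noncomputable def solvent (n : ℕ) (u : Fin n → ℝ) : ℝ := 1 - ∑ i, u i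

/-- Linear pressure `qᵢ(u) = ∑ⱼ q_{ij} uⱼ`. -/
noncomputable def press (n : ℕ) (q : Fin n → Fin n → ℝ) (u : Fin n → ℝ) (i : Fin n) : ℝ :=
  ∑ j, q i j * u j

/-- Hessian of the Boltzmann entropy: `H(u)_{ij} = δ_{ij}/uᵢ + 1/u₀`. -/
noncomputable def hessB (n : ℕ) (u : Fin n → ℝ) (i j : Fin n) : ℝ :=
  (if i = j then 1 / u i else 0) + 1 / solvent n u

/-- Diffusion matrix of the multiphase cross-diffusion system. -/
noncomputable def diffA (n : ℕ) (q r : Fin n → Fin n → ℝ) (u : Fin n → ℝ) (i j : Fin n) : ℝ :=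
  (press n q u i - press n r u i) * (if i = j then 1 else 0) +
    u i * (q i j - press n q u j + r i j + press n r u j -
      ∑ l, u l * (q l j + r l j))

lemma sum_diffA (n : ℕ) (q r : Fin n → Fin n → ℝ) (u : Fin n → ℝ) (j : Fin n) :
    ∑ k, diffA n q r u k j =
      solvent n u * (press n q u j - press n r u j + ∑ l, u l * (q l j + r l j)) := by
  set S := ∑ l, u l * (q l j + r l j)
  have hsplit : ∀ k, diffA n q r u k j = (if k = j then press n q u k - press n r u k else 0)
      + u k * (q k j + r k j) + u k * (press n r u j - press n q u j - S) := by
    intro k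
    simp only [diffA, mul_ite, mul_one, mul_zero]
    ring
  simp only [hsplit, sum_add_distrib, sum_ite_eq', mem_univ, if_true, ← sum_mul, solvent]
  ring

lemma hessB_mul_diffA (n : ℕ) (q r : Fin n → Fin n → ℝ) (u : Fin n → ℝ)
    (hu0 : solvent n u ≠ 0) {i : Fin n} (hui : u i ≠ 0) (j : Fin n) :
    ∑ k, hessB n u i k * diffA n q r u k j =
      (if i = j then (press n q u i - press n r u i) / u i else 0) + (q i j + r i j) := by
  simp only [hessB, add_mul, sum_add_distrib, ite_mul, zero_mul, sum_ite_eq, mem_univ, if_true,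
    ← mul_sum, sum_diffA]
  rw [diffA]
  split_ifs <;> field_simp <;> ring

lemma press_sub_press_nonneg {n : ℕ} {q r : Fin n → Fin n → ℝ} {u : Fin n → ℝ}
    (hqr : ∀ i j, r i j ≤ q i j) (hu : ∀ i, 0 ≤ u i) (i : Fin n) :
    0 ≤ press n q u i - press n r u i := by
  rw [press, press, ← sum_sub_distrib]
  exact sum_nonneg fun j _ => by rw [← sub_mul]; exact mul_nonneg (sub_nonneg.2 (hqr i j)) (hu j)

lemma sum_sum_mul_diagonal_add_mul {ι R : Type*} [Fintype ι] [DecidableEq ι] [CommSemiring R]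
    (d : ι → R) (M : ι → ι → R) (z : ι → R) :
    ∑ i, ∑ j, z i * ((if i = j then d i else 0) + M i j) * z j =
      ∑ i, d i * z i ^ 2 + ∑ i, ∑ j, M i j * z i * z j := by
  simp only [mul_add, add_mul, sum_add_distrib, mul_ite, ite_mul, mul_zero, zero_mul,
    sum_ite_eq, mem_univ, if_true]
  congr 1
  · exact sum_congr rfl fun i _ => by ring
  · exact sum_congr rfl fun i _ => sum_congr rfl fun j _ => by ring

theorem stmt_0_general (n : ℕ) (q r : Fin n → Fin n → ℝ) (α : ℝ)
    (hqr : ∀ i j, r i j ≤ q i j)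
    (hpd : ∀ z : Fin n → ℝ, α * ∑ i, (z i) ^ 2 ≤ ∑ i, ∑ j, (q i j + r i j) * z i * z j)
    (u : Fin n → ℝ) (hu : ∀ i, 0 < u i) (hsum : ∑ i, u i < 1)
    (z : Fin n → ℝ) :
    α * ∑ i, (z i) ^ 2 ≤
      ∑ i, ∑ j, z i * (∑ k, hessB n u i k * diffA n q r u k j) * z j := by
  have hu0 : solvent n u ≠ 0 := by unfold solvent; linarith
  simp only [hessB_mul_diffA n q r u hu0 (hu _).ne', sum_sum_mul_diagonal_add_mul]
  have hdiag : 0 ≤ ∑ i, (press n q u i - press n r u i) / u i * z i ^ 2 :=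
    sum_nonneg fun i _ => mul_nonneg
      (div_nonneg (press_sub_press_nonneg hqr (fun j => (hu j).le) i) (hu i).le) (sq_nonneg _)
  linarith [hpd z]

theorem stmt_0 (n : ℕ) (hn : 1 ≤ n) (q r : Fin n → Fin n → ℝ) (α : ℝ) (hα : 0 < α)
    (hr : ∀ i j, 0 ≤ r i j) (hqr : ∀ i j, r i j ≤ q i j)
    (hpd : ∀ z : Fin n → ℝ, α * ∑ i, (z i) ^ 2 ≤ ∑ i, ∑ j, (q i j + r i j) * z i * z j)
    (u : Fin n → ℝ) (hu : ∀ i, 0 < u i) (hsum : ∑ i, u i < 1)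
    (z : Fin n → ℝ) :
    α * ∑ i, (z i) ^ 2 ≤
      ∑ i, ∑ j, z i * (∑ k, hessB n u i k * diffA n q r u k j) * z j :=
  stmt_0_general n q r α hqr hpd u hu hsum z
end

section
/- Let n ≥ 2 and let (k_{ij})_{i,j=0}^n be symmetric with k_{ij} > 0 for i ≠ j and k_{ii} = 0. For u in the open simplex D (u_i > 0, ∑_{i=1}^n u_i < 1, u₀ = 1 − ∑_{i=1}^n u_i), define the n×n matrix K(u) by K_{ii}(u) = ∑_{ℓ=0}^n k_{iℓ} u_ℓ + k_{i0} u_i and K_{ij}(u) = (k_{i0} − k_{ij}) u_i for i ≠ j. Then for n = 2, K(u) is invertible with det K(u) = κ(u) := k₀₁k₀₂u₀ + k₀₁k₁₂u₁ + k₀₂k₁₂u₂ > 0, and K(u)^{-1} = κ(u)^{-1} · [[k₀₂ + (k₁₂−k₀₂)u₁, (k₁₂−k₀₁)u₁],[(k₁₂−k₀₂)u₂, k₀₁ + (k₁₂−k₀₁)u₂]]. -/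
/-- Drag matrix `K(u)` of the two-phase (n = 2) model, expressed with the
solvent fraction `u₀ = 1 - u₁ - u₂`. -/
noncomputable def dragK (k01 k02 k12 u₁ u₂ : ℝ) : Matrix (Fin 2) (Fin 2) ℝ :=
  Matrix.of
    ![![k01 * ((1 - u₁ - u₂) + u₁) + k12 * u₂, (k01 - k12) * u₁],
      ![(k02 - k12) * u₂, k02 * ((1 - u₁ - u₂) + u₂) + k12 * u₁]]

theorem stmt_13 (k01 k02 k12 u₁ u₂ : ℝ)
    (hk01 : 0 < k01) (hk02 : 0 < k02) (hk12 : 0 < k12)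
    (hu₁ : 0 < u₁) (hu₂ : 0 < u₂) (hsum : u₁ + u₂ < 1) :
    0 < k01 * k02 * (1 - u₁ - u₂) + k01 * k12 * u₁ + k02 * k12 * u₂ ∧
    (dragK k01 k02 k12 u₁ u₂).det =
      k01 * k02 * (1 - u₁ - u₂) + k01 * k12 * u₁ + k02 * k12 * u₂ ∧
    IsUnit (dragK k01 k02 k12 u₁ u₂) ∧
    (dragK k01 k02 k12 u₁ u₂)⁻¹ =
      (k01 * k02 * (1 - u₁ - u₂) + k01 * k12 * u₁ + k02 * k12 * u₂)⁻¹ •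
        Matrix.of
          ![![k02 + (k12 - k02) * u₁, (k12 - k01) * u₁],
            ![(k12 - k02) * u₂, k01 + (k12 - k01) * u₂]] := by
  set κ := k01 * k02 * (1 - u₁ - u₂) + k01 * k12 * u₁ + k02 * k12 * u₂ with hκ
  have hpos : 0 < κ := by
    have : 0 < 1 - u₁ - u₂ := by linarith
    positivity
  have hdet : (dragK k01 k02 k12 u₁ u₂).det = κ := by
    simp [dragK, Matrix.det_fin_two, hκ]; ring
  refine ⟨hpos, hdet, ?_, ?_⟩
  · rw [Matrix.isUnit_iff_isUnit_det, hdet]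
    exact (hpos.ne').isUnit
  · apply Matrix.inv_eq_right_inv
    ext i j
    fin_cases i <;> fin_cases j <;>
      · simp [dragK, Matrix.mul_apply, Fin.sum_univ_two, Matrix.smul_apply]
        field_simp
        ring
end

section
/- Consider n = 2 with q₁₁ = q₂₂ = 1, q₁₂ = q₂₁ = 10, k₀₁ = k₀₂ = 1, k₁₂ = 10, r₁ = r₂ = 0, and define for u = (u₁,u₂) in the open simplex D the matrix G(u) = γ(u) · [[(9u₁² + (90u₂+1)u₁ + 5u₂)u₂, (90u₁ + 9u₂ + 5)u₁u₂],[(9u₁ + 90u₂ + 5)u₁u₂, (9u₂² + (90u₁+1)u₂ + 5u₁)u₁]], where γ(u) = 2/(1 + 9u₁ + 9u₂). Then there exists u ∈ D (for instance u = (0.15, 0.65)) such that the symmetric part of G(u) has a negative eigenvalue; i.e., there exists z ∈ ℝ² with zᵀ G(u) z < 0. -/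
/-- The entropy-transformed diffusion matrix `G(u) = h_B''(u) K(u)⁻¹ A(u)` for the
specific coefficients `q₁₁ = q₂₂ = 1`, `q₁₂ = q₂₁ = 10`, `k₀₁ = k₀₂ = 1`, `k₁₂ = 10`. -/
noncomputable def Gmat (u₁ u₂ : ℝ) : Matrix (Fin 2) (Fin 2) ℝ :=
  (2 / (1 + 9 * u₁ + 9 * u₂)) •
    Matrix.of
      ![![(9 * u₁ ^ 2 + (90 * u₂ + 1) * u₁ + 5 * u₂) * u₂,
          (90 * u₁ + 9 * u₂ + 5) * u₁ * u₂],
        ![(9 * u₁ + 90 * u₂ + 5) * u₁ * u₂,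
          (9 * u₂ ^ 2 + (90 * u₁ + 1) * u₂ + 5 * u₁) * u₁]]

theorem stmt_14 :
    ∃ u₁ u₂ : ℝ, 0 < u₁ ∧ 0 < u₂ ∧ u₁ + u₂ < 1 ∧
      ∃ z : Fin 2 → ℝ, ∑ i, ∑ j, z i * Gmat u₁ u₂ i j * z j < 0 := by
  -- Without the factor `γ(u) = 2/8.2`, the form at `z = (-1, 2)` is
  -- `G₁₁ - 2 (G₁₂ + G₂₁) + 4 G₂₂ = 8.045375 - 17.394 + 8.3865 < 0`.
  refine ⟨0.15, 0.65, by norm_num, by norm_num, by norm_num, ![-1, 2], ?_⟩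
  norm_num [Gmat, Fin.sum_univ_two]
end
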